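/- Discontinuity set of the delayed intensity for general kernels: let U ∈ ℕ, let S₁, …, S_U be finite sets of real event times, let μ ∈ ℝ, δ_{u'} ≥ 0, and let g_{u'} : ℝ → ℝ satisfy g_{u'}(x) = 0 for x < 0, g_{u'}(0) > 0, g_{u'} right-continuous at 0, and g_{u'} continuous on (0, ∞). Define λ(t) = μ + Σ_{u'=1}^U Σ_{s ∈ S_{u'}, s + δ_{u'} < t} g_{u'}(t − δ_{u'} − s). Then λ is discontinuous at τ ∈ ℝ if and only if τ ∈ ⋃_{u'=1}^U (δ_{u'} + S_{u'}); moreover at each such τ the right-hand limit exceeds λ(τ) by Σ_{u' : τ ∈ δ_{u'} + S_{u'}} g_{u'}(0) > 0. -/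

import Mathlib

/-!
An event at time `s` of a source with delay `δ` contributes `t ↦ g (t - δ - s)` once `t` passes
its arrival `a = s + δ`, and `0` before. Since `g` is continuous on `(0, ∞)`, this contribution is
continuous away from `a`; at `a` it takes the value `0` while its right limit is `g 0`, by
right-continuity of `g` at `0`. Summing the finitely many contributions, the right limit of `λ`
at `τ` exceeds `λ τ` by the sum of `g 0` over the arrivals at `τ`, which is positive as soon as
there is one, so it rules out continuity there.
-/

open Set Filter Topology

noncomputable def shiftedKernel (g : ℝ → ℝ) (a t : ℝ) : ℝ :=
  if a < t then g (t - a) else 0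

section ShiftedKernel

variable {g : ℝ → ℝ} {a τ : ℝ}

lemma continuousAt_shiftedKernel (hgc : ContinuousOn g (Ioi 0)) (hτ : τ ≠ a) :
    ContinuousAt (shiftedKernel g a) τ := by
  rcases hτ.lt_or_gt with hlt | hgt
  · refine continuousAt_const.congr (f := fun _ => (0 : ℝ)) ?_
    filter_upwards [Iio_mem_nhds hlt] with t ht
    exact (if_neg (not_lt.2 ht.le)).symm
  · have hg : ContinuousAt (fun t => g (t - a)) τ :=
      (hgc.continuousAt (Ioi_mem_nhds (sub_pos.2 hgt))).comp (f := fun t => t - a) (by fun_prop)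
    refine hg.congr ?_
    filter_upwards [Ioi_mem_nhds hgt] with t ht
    exact (if_pos ht).symm

lemma tendsto_shiftedKernel_nhdsGT_self (hgrc : ContinuousWithinAt g (Ici 0) 0) :
    Tendsto (shiftedKernel g a) (𝓝[>] a) (𝓝 (g 0)) := by
  have hshift : Tendsto (fun t => t - a) (𝓝[>] a) (𝓝[≥] 0) := by
    refine tendsto_nhdsWithin_of_tendsto_nhds_of_eventually_within _ ?_ ?_
    · simpa using ((continuous_sub_right a).tendsto a).mono_left nhdsWithin_le_nhds
    · filter_upwards [self_mem_nhdsWithin] with t (ht : a < t)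
      exact sub_nonneg.2 ht.le
  refine (hgrc.tendsto.comp hshift).congr' ?_
  filter_upwards [self_mem_nhdsWithin] with t ht
  exact (if_pos ht).symm

lemma tendsto_shiftedKernel_nhdsGT (hgrc : ContinuousWithinAt g (Ici 0) 0)
    (hgc : ContinuousOn g (Ioi 0)) :
    Tendsto (shiftedKernel g a) (𝓝[>] τ)
      (𝓝 (shiftedKernel g a τ + if a = τ then g 0 else 0)) := by
  by_cases h : a = τ
  · subst h
    simpa [shiftedKernel] using tendsto_shiftedKernel_nhdsGT_self hgrc
  · simpa [h] using (continuousAt_shiftedKernel hgc (Ne.symm h)).tendsto.mono_left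
      nhdsWithin_le_nhds

end ShiftedKernel

noncomputable def delayedIntensity {ι : Type*} [Fintype ι] (μ : ℝ) (S : ι → Finset ℝ)
    (δ : ι → ℝ) (g : ι → ℝ → ℝ) (t : ℝ) : ℝ :=
  μ + ∑ u, ∑ s ∈ S u, shiftedKernel (g u) (s + δ u) t

section DelayedIntensity

variable {ι : Type*} [Fintype ι] {μ τ : ℝ} {S : ι → Finset ℝ} {δ : ι → ℝ} {g : ι → ℝ → ℝ}

lemma continuousAt_delayedIntensity (hgc : ∀ u, ContinuousOn (g u) (Ioi 0))
    (hτ : ∀ u, τ - δ u ∉ S u) : ContinuousAt (delayedIntensity μ S δ g) τ :=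
  continuousAt_const.add <| tendsto_finsetSum _ fun u _ => tendsto_finsetSum _ fun s _ =>
    continuousAt_shiftedKernel (hgc u) fun h => hτ u (by rwa [h, add_sub_cancel_right])

lemma tendsto_delayedIntensity_nhdsGT (hgrc : ∀ u, ContinuousWithinAt (g u) (Ici 0) 0)
    (hgc : ∀ u, ContinuousOn (g u) (Ioi 0)) :
    Tendsto (delayedIntensity μ S δ g) (𝓝[>] τ)
      (𝓝 (delayedIntensity μ S δ g τ + ∑ u with τ - δ u ∈ S u, g u 0)) := by
  have hjump : ∀ u, ∑ s ∈ S u, (if s + δ u = τ then g u 0 else 0) =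
      if τ - δ u ∈ S u then g u 0 else 0 := fun u => by
    simp_rw [← eq_sub_iff_add_eq]
    exact Finset.sum_ite_eq' (S u) (τ - δ u) fun _ => g u 0
  have hlim := (tendsto_finsetSum (Finset.univ : Finset ι) fun u _ =>
    tendsto_finsetSum (S u) fun s _ =>
      tendsto_shiftedKernel_nhdsGT (a := s + δ u) (τ := τ) (hgrc u) (hgc u)).const_add μ
  rw [Finset.sum_filter, delayedIntensity, add_assoc]
  simp only [Finset.sum_add_distrib, hjump] at hlim
  exact hlim

end DelayedIntensity

lemma not_continuousAt_of_tendsto_nhdsGT {f : ℝ → ℝ} {x J : ℝ}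
    (hf : Tendsto f (𝓝[>] x) (𝓝 (f x + J))) (hJ : J ≠ 0) : ¬ ContinuousAt f x := fun hc =>
  hJ <| by simpa using tendsto_nhds_unique hf (hc.tendsto.mono_left nhdsWithin_le_nhds)

theorem delayed_intensity_discontinuity_set_general
    (U : ℕ) (S : Fin U → Finset ℝ) (μ : ℝ) (δ : Fin U → ℝ)
    (g : Fin U → ℝ → ℝ)
    (hgpos : ∀ u', 0 < g u' 0)
    (hgrc : ∀ u', ContinuousWithinAt (g u') (Set.Ici (0 : ℝ)) 0)
    (hgc : ∀ u', ContinuousOn (g u') (Set.Ioi (0 : ℝ)))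
    (lam : ℝ → ℝ)
    (hlam : ∀ t : ℝ, lam t = μ + ∑ u',
      ∑ s ∈ (S u').filter (fun s => s + δ u' < t), g u' (t - δ u' - s)) :
    ∀ τ : ℝ,
      (¬ ContinuousAt lam τ ↔ τ ∈ ⋃ u', (fun s => δ u' + s) '' (S u' : Set ℝ)) ∧
      (τ ∈ ⋃ u', (fun s => δ u' + s) '' (S u' : Set ℝ) →
        ∃ L : ℝ, Tendsto lam (nhdsWithin τ (Set.Ioi τ)) (nhds L) ∧
          L - lam τ = ∑ u' ∈ Finset.univ.filter (fun u' => τ - δ u' ∈ S u'), g u' 0 ∧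
          0 < ∑ u' ∈ Finset.univ.filter (fun u' => τ - δ u' ∈ S u'), g u' 0) := by
  intro τ
  have hlam' : lam = delayedIntensity μ S δ g := funext fun t => by
    simp only [hlam, delayedIntensity, shiftedKernel, Finset.sum_filter, sub_sub, add_comm (δ _)]
  have hmem : τ ∈ ⋃ u', (fun s => δ u' + s) '' (S u' : Set ℝ) ↔ ∃ u, τ - δ u ∈ S u := by
    simp [add_comm, sub_eq_add_neg]
  have hpos : (∃ u, τ - δ u ∈ S u) →
      0 < ∑ u' ∈ Finset.univ.filter (fun u' => τ - δ u' ∈ S u'), g u' 0 := fun ⟨u, hu⟩ =>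
    Finset.sum_pos (fun u _ => hgpos u) ⟨u, Finset.mem_filter.2 ⟨Finset.mem_univ u, hu⟩⟩
  have hlim := tendsto_delayedIntensity_nhdsGT (μ := μ) (S := S) (δ := δ) (τ := τ) hgrc hgc
  subst hlam'
  rw [hmem]
  refine ⟨⟨fun hdisc => ?_, fun hτ => not_continuousAt_of_tendsto_nhdsGT hlim (hpos hτ).ne'⟩,
    fun hτ => ⟨_, hlim, add_sub_cancel_left _ _, hpos hτ⟩⟩
  by_contra! hτ
  exact hdisc (continuousAt_delayedIntensity hgc hτ)

/-- Discontinuity set of the delayed intensity for general kernels: `λ` is discontinuous at `τ`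
iff `τ` lies in the union of delayed arrival sets `δ_{u'} + S_{u'}`; moreover at each such `τ`
the right-hand limit exceeds `λ(τ)` by `Σ_{u' : τ ∈ δ_{u'} + S_{u'}} g_{u'}(0) > 0`. -/
theorem delayed_intensity_discontinuity_set
    (U : ℕ) (S : Fin U → Finset ℝ) (μ : ℝ) (δ : Fin U → ℝ) (hδ : ∀ u', 0 ≤ δ u')
    (g : Fin U → ℝ → ℝ)
    (hg0 : ∀ u', ∀ x : ℝ, x < 0 → g u' x = 0)
    (hgpos : ∀ u', 0 < g u' 0)
    (hgrc : ∀ u', ContinuousWithinAt (g u') (Set.Ici (0 : ℝ)) 0)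
    (hgc : ∀ u', ContinuousOn (g u') (Set.Ioi (0 : ℝ)))
    (lam : ℝ → ℝ)
    (hlam : ∀ t : ℝ, lam t = μ + ∑ u',
      ∑ s ∈ (S u').filter (fun s => s + δ u' < t), g u' (t - δ u' - s)) :
    ∀ τ : ℝ,
      (¬ ContinuousAt lam τ ↔ τ ∈ ⋃ u', (fun s => δ u' + s) '' (S u' : Set ℝ)) ∧
      (τ ∈ ⋃ u', (fun s => δ u' + s) '' (S u' : Set ℝ) →
        ∃ L : ℝ, Tendsto lam (nhdsWithin τ (Set.Ioi τ)) (nhds L) ∧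
          L - lam τ = ∑ u' ∈ Finset.univ.filter (fun u' => τ - δ u' ∈ S u'), g u' 0 ∧
          0 < ∑ u' ∈ Finset.univ.filter (fun u' => τ - δ u' ∈ S u'), g u' 0) :=
  delayed_intensity_discontinuity_set_general U S μ δ g hgpos hgrc hgc lam hlam
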